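/- Let R be a ring with identity and a, b, c ∈ R with aba = aca. If ba has a Drazin inverse, then ac has a Drazin inverse and (ba)^D · c = b · (ac)^D. -/

import Mathlib

/-!
Write `d = (ba)^D`. The identity `aba = aca` lets `ac` act as `ab` on every element of the form
`a * t`, and `ca` as `ba` on every element of the form `t * a`; in particular
`(ac)^(k+1) = a (ba)^k c`. This transfers the defining identities of `d`, and the index bound
`(ba)^(k+1) d = (ba)^k`, to `e = a d² c` (Cline's formula), so `e = (ac)^D`. Then
`b e = (ba) d² c = d c`, and uniqueness of Drazin inverses gives the formula for every choice
of `d` and `e`.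
-/

def IsDrazinInv {R : Type*} [Ring R] (x y : R) : Prop :=
  x * y = y * x ∧ y * x * y = y ∧ IsNilpotent (x - x^2 * y)

section
variable {R : Type*} [Ring R]

theorem sub_sq_mul_pow_succ {x y : R} (hxy : Commute x y) (hyxy : y * x * y = y)
    (n : ℕ) : (x - x ^ 2 * y) ^ (n + 1) = x ^ (n + 1) - x ^ (n + 2) * y := by
  have hp : IsIdempotentElem (1 - x * y) := by
    refine IsIdempotentElem.one_sub ?_
    calc x * y * (x * y) = x * (y * x * y) := by noncomm_ring
      _ = x * y := by rw [hyxy]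
  have hcomm : Commute x (1 - x * y) :=
    (Commute.one_right x).sub_right ((Commute.refl x).mul_right hxy)
  calc (x - x ^ 2 * y) ^ (n + 1) = (x * (1 - x * y)) ^ (n + 1) := by noncomm_ring
    _ = x ^ (n + 1) * (1 - x * y) := by rw [hcomm.mul_pow, hp.pow_succ_eq]
    _ = x ^ (n + 1) - x ^ (n + 2) * y := by rw [mul_sub, mul_one, ← mul_assoc, ← pow_succ]

theorem isDrazinInv_iff {x y : R} :
    IsDrazinInv x y ↔ Commute x y ∧ y * x * y = y ∧ ∃ k, x ^ (k + 1) * y = x ^ k := by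
  refine ⟨fun ⟨hxy, hyxy, n, hn⟩ ↦ ⟨hxy, hyxy, n + 1, ?_⟩,
    fun ⟨hxy, hyxy, k, hk⟩ ↦ ⟨hxy, hyxy, k + 1, ?_⟩⟩
  · have h0 : x ^ (n + 1) - x ^ (n + 2) * y = 0 := by
      rw [← sub_sq_mul_pow_succ hxy hyxy, pow_succ, hn, zero_mul]
    exact (sub_eq_zero.mp h0).symm
  · rw [sub_sq_mul_pow_succ hxy hyxy, pow_succ' x (k + 1), mul_assoc, hk,
      ← pow_succ', sub_self]

theorem pow_succ_mul_eq_pow_of_le {x y : R} {k m : ℕ} (hk : x ^ (k + 1) * y = x ^ k)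
    (hkm : k ≤ m) : x ^ (m + 1) * y = x ^ m := by
  obtain ⟨j, rfl⟩ := Nat.exists_eq_add_of_le hkm
  calc x ^ (k + j + 1) * y = x ^ j * (x ^ (k + 1) * y) := by
        rw [← mul_assoc, ← pow_add]; congr 2; omega
    _ = x ^ (k + j) := by rw [hk, ← pow_add, add_comm]

namespace IsDrazinInv

variable {x y z : R}

theorem pow_succ_mul_pow (hy : IsDrazinInv x y) (k : ℕ) : y ^ (k + 1) * x ^ k = y := by
  obtain ⟨hxy, hyxy, -⟩ := hy
  have hyyx : y * y * x = y := by rw [mul_assoc, ← hxy, ← mul_assoc, hyxy]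
  induction k with
  | zero => simp
  | succ k ih =>
    calc y ^ (k + 2) * x ^ (k + 1) = y ^ k * (y * y * x) * x ^ k := by
          rw [pow_succ, pow_succ, pow_succ']; noncomm_ring
      _ = y ^ (k + 1) * x ^ k := by rw [hyyx, ← pow_succ]
      _ = y := ih

theorem pow_mul_pow_succ (hy : IsDrazinInv x y) (k : ℕ) : x ^ k * y ^ (k + 1) = y := by
  have hxy : Commute x y := hy.1
  rw [(hxy.pow_pow k (k + 1)).eq, hy.pow_succ_mul_pow]

theorem sq_mul (hy : IsDrazinInv x y) : y ^ 2 * x = y := by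
  simpa using hy.pow_succ_mul_pow 1

theorem mul_sq (hy : IsDrazinInv x y) : x * y ^ 2 = y := by
  simpa using hy.pow_mul_pow_succ 1

theorem unique (hy : IsDrazinInv x y) (hz : IsDrazinInv x z) : y = z := by
  obtain ⟨hxy, -, ky, hky⟩ := isDrazinInv_iff.mp hy
  obtain ⟨-, -, kz, hkz⟩ := isDrazinInv_iff.mp hz
  set k := max ky kz
  have hky' : x ^ (k + 1) * y = x ^ k := pow_succ_mul_eq_pow_of_le hky (le_max_left _ _)
  have hkz' : x ^ (k + 1) * z = x ^ k := pow_succ_mul_eq_pow_of_le hkz (le_max_right _ _)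
  have hyx : y ^ (k + 1) * x ^ (k + 1) = y * x := by
    rw [pow_succ x, ← mul_assoc, hy.pow_succ_mul_pow]
  have hxz : x ^ (k + 1) * z ^ (k + 1) = x * z := by
    rw [pow_succ' x, mul_assoc, hz.pow_mul_pow_succ]
  calc y = y ^ (k + 1) * (x ^ (k + 1) * z) := by rw [hkz', hy.pow_succ_mul_pow]
    _ = y * x * z := by rw [← mul_assoc, hyx]
    _ = y * (x ^ (k + 1) * z ^ (k + 1)) := by rw [hxz, mul_assoc]
    _ = x ^ k * z ^ (k + 1) := by rw [← mul_assoc, ← (hxy.pow_left (k + 1)).eq, hky']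
    _ = z := hz.pow_mul_pow_succ k

end IsDrazinInv

section
variable {a b c : R}

theorem mul_pow_mul_mul_eq_mul_pow_succ (h : a * b * a = a * c * a) (k : ℕ) :
    a * (b * a) ^ k * c * a = a * (b * a) ^ (k + 1) := by
  have hsemi : a * (b * a) ^ k = (a * b) ^ k * a :=
    (SemiconjBy.pow_right (mul_assoc a b a).symm k : SemiconjBy a ((b * a) ^ k) ((a * b) ^ k)).eq
  calc a * (b * a) ^ k * c * a = (a * b) ^ k * (a * c * a) := by rw [hsemi]; simp only [mul_assoc]
    _ = a * (b * a) ^ k * (b * a) := by rw [← h, hsemi]; simp only [mul_assoc]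
    _ = a * (b * a) ^ (k + 1) := by rw [pow_succ, mul_assoc]

theorem pow_succ_mul_mul_eq_pow_add_two (h : a * b * a = a * c * a) (k : ℕ) :
    (b * a) ^ (k + 1) * c * a = (b * a) ^ (k + 2) := by
  calc (b * a) ^ (k + 1) * c * a = b * (a * (b * a) ^ k * c * a) := by
        rw [pow_succ']; simp only [mul_assoc]
    _ = (b * a) ^ (k + 2) := by
        rw [mul_pow_mul_mul_eq_mul_pow_succ h, pow_succ' _ (k + 1)]; simp only [mul_assoc]

theorem mul_pow_succ_eq_mul_pow_mul (h : a * b * a = a * c * a) (k : ℕ) :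
    (a * c) ^ (k + 1) = a * (b * a) ^ k * c := by
  induction k with
  | zero => simp
  | succ k ih =>
    rw [pow_succ, ih, ← mul_assoc, mul_pow_mul_mul_eq_mul_pow_succ h]

end

theorem IsDrazinInv.cline {a b c d : R} (h : a * b * a = a * c * a)
    (hd : IsDrazinInv (b * a) d) : IsDrazinInv (a * c) (a * d ^ 2 * c) := by
  have hd2 : b * a * d ^ 2 = d := hd.mul_sq
  have hd2' : d ^ 2 * (b * a) = d := hd.sq_mul
  have hba2 : b * a * c * a = (b * a) ^ 2 := by simpa using pow_succ_mul_mul_eq_pow_add_two h 0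
  obtain ⟨-, -, k, hk⟩ := isDrazinInv_iff.mp hd
  have hleft : a * c * (a * d ^ 2 * c) = a * d * c :=
    calc a * c * (a * d ^ 2 * c) = a * c * a * d ^ 2 * c := by noncomm_ring
      _ = a * (b * a * d ^ 2) * c := by rw [← h]; noncomm_ring
      _ = a * d * c := by rw [hd2]
  have hright : a * d ^ 2 * c * (a * c) = a * d * c :=
    calc a * d ^ 2 * c * (a * c) = a * d * (d ^ 2 * (b * a)) * c * a * c := by
          rw [hd2']; noncomm_ring
      _ = a * (d ^ (2 + 1) * (b * a * c * a)) * c := by noncomm_ring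
      _ = a * d * c := by rw [hba2, hd.pow_succ_mul_pow]
  refine isDrazinInv_iff.mpr ⟨hleft.trans hright.symm, ?_, k + 1, ?_⟩
  · calc a * d ^ 2 * c * (a * c) * (a * d ^ 2 * c)
          = a * (d ^ 2 * (b * a)) * c * (a * d ^ 2 * c) := by rw [hright, hd2']
      _ = a * d ^ 2 * (b * a * c * a) * d ^ 2 * c := by noncomm_ring
      _ = a * (d ^ 2 * (b * a)) * (b * a * d ^ 2) * c := by rw [hba2]; noncomm_ring
      _ = a * d ^ 2 * c := by rw [hd2, hd2']; noncomm_ring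
  · calc (a * c) ^ (k + 1 + 1) * (a * d ^ 2 * c)
          = a * ((b * a) ^ (k + 1) * c * a) * d ^ 2 * c := by
          rw [mul_pow_succ_eq_mul_pow_mul h]; noncomm_ring
      _ = a * ((b * a) ^ (k + 1) * (b * a * d ^ 2)) * c := by
          rw [pow_succ_mul_mul_eq_pow_add_two h, pow_succ _ (k + 1)]; noncomm_ring
      _ = (a * c) ^ (k + 1) := by rw [hd2, hk, mul_pow_succ_eq_mul_pow_mul h]

end

theorem stmt_9 {R : Type*} [Ring R] (a b c : R) (h : a*b*a = a*c*a)
    (hba : ∃ d, IsDrazinInv (b*a) d) :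
    (∃ e, IsDrazinInv (a*c) e) ∧
    (∀ d e, IsDrazinInv (b*a) d → IsDrazinInv (a*c) e → d * c = b * e) := by
  obtain ⟨d₀, hd₀⟩ := hba
  refine ⟨⟨_, hd₀.cline h⟩, fun d e hd he ↦ ?_⟩
  calc d * c = b * a * d ^ 2 * c := by rw [hd.mul_sq]
    _ = b * (a * d ^ 2 * c) := by noncomm_ring
    _ = b * e := by rw [he.unique (hd.cline h)]
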